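/- Let G be a finite directed graph, k ≥ 0, and l' < l non-negative integers. Let C be a weakly connected component of the (k,l)-core of G and C' a weakly connected component of the (k,l')-core of G. Then either C and C' have no vertex in common, or C is a subgraph of C'. (Hence, for each fixed k, the weakly connected components of the (k,l)-cores over all values of l form a laminar family, so they can be organized into the k-tree of the D-Forest index, with each subtree corresponding to one connected (k,l)-core.) -/

import Mathlib

open scoped Classical

/-- A finite directed graph: a finite vertex set together with a finite set of edges,
each edge being an ordered pair of distinct vertices (at most one edge per ordered pair). -/
structure DirGraph (V : Type*) where
  verts : Finset V
  edges : Finset (V × V)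
  edge_fst : ∀ e ∈ edges, e.1 ∈ verts
  edge_snd : ∀ e ∈ edges, e.2 ∈ verts
  ne : ∀ e ∈ edges, e.1 ≠ e.2

namespace DirGraph

variable {V : Type*}

/-- `H` is a subgraph of `G`. -/
def IsSubgraph (H G : DirGraph V) : Prop :=
  H.verts ⊆ G.verts ∧ H.edges ⊆ G.edges

/-- The in-degree of `v` within `G`: the number of edges of `G` ending at `v`. -/
noncomputable def inDeg (G : DirGraph V) (v : V) : ℕ :=
  (G.edges.filter fun e => e.2 = v).card

/-- The out-degree of `v` within `G`: the number of edges of `G` starting at `v`. -/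
noncomputable def outDeg (G : DirGraph V) (v : V) : ℕ :=
  (G.edges.filter fun e => e.1 = v).card

/-- Every vertex of `G` has in-degree at least `k` and out-degree at least `l` within `G`. -/
def DegOK (G : DirGraph V) (k l : ℕ) : Prop :=
  ∀ v ∈ G.verts, k ≤ G.inDeg v ∧ l ≤ G.outDeg v

/-- `C` is the (k,l)-core of `G`: the largest subgraph of `G` in which every vertex has
in-degree at least `k` and out-degree at least `l`. -/
def IsKLCore (G : DirGraph V) (k l : ℕ) (C : DirGraph V) : Prop :=
  C.IsSubgraph G ∧ C.DegOK k l ∧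
    ∀ H : DirGraph V, H.IsSubgraph G → H.DegOK k l → H.IsSubgraph C

/-- Adjacency in the underlying undirected graph (edge directions ignored). -/
def Adj (G : DirGraph V) (u v : V) : Prop := (u, v) ∈ G.edges ∨ (v, u) ∈ G.edges

/-- Reachability in the underlying undirected graph (edge directions ignored). -/
def Reach (G : DirGraph V) : V → V → Prop := Relation.ReflTransGen G.Adj

/-- The weakly connected component of `q` in `G`. -/
noncomputable def component (G : DirGraph V) (q : V) : DirGraph V where
  verts := G.verts.filter fun v => G.Reach q v
  edges := G.edges.filter fun e => G.Reach q e.1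
  edge_fst := by
    intro e he
    rw [Finset.mem_filter] at he ⊢
    exact ⟨G.edge_fst e he.1, he.2⟩
  edge_snd := by
    intro e he
    rw [Finset.mem_filter] at he ⊢
    exact ⟨G.edge_snd e he.1, he.2.tail (Or.inl he.1)⟩
  ne := fun e he => G.ne e (Finset.mem_filter.mp he).1

/-- `C` is a weakly connected component of `G`. -/
def IsComponent (G C : DirGraph V) : Prop := ∃ q ∈ G.verts, C = G.component q

/-- `G` is weakly connected: any two vertices are joined by a path in the underlying
undirected graph. -/
def WeaklyConnected (G : DirGraph V) : Prop :=
  ∀ u ∈ G.verts, ∀ v ∈ G.verts, G.Reach u v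

/-- Reachability along directed paths. -/
def DiReach (G : DirGraph V) : V → V → Prop :=
  Relation.ReflTransGen fun u v => (u, v) ∈ G.edges

/-- `G` is strongly connected: every vertex is reachable from every other vertex
by a directed path. -/
def StronglyConnected (G : DirGraph V) : Prop :=
  ∀ u ∈ G.verts, ∀ v ∈ G.verts, G.DiReach u v

/-- The union of two graphs: union of vertex sets, union of edge sets. -/
noncomputable def union [DecidableEq V] (G₁ G₂ : DirGraph V) : DirGraph V where
  verts := G₁.verts ∪ G₂.verts
  edges := G₁.edges ∪ G₂.edges
  edge_fst := by
    intro e he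
    rcases Finset.mem_union.mp he with h | h
    · exact Finset.mem_union_left _ (G₁.edge_fst e h)
    · exact Finset.mem_union_right _ (G₂.edge_fst e h)
  edge_snd := by
    intro e he
    rcases Finset.mem_union.mp he with h | h
    · exact Finset.mem_union_left _ (G₁.edge_snd e h)
    · exact Finset.mem_union_right _ (G₂.edge_snd e h)
  ne := by
    intro e he
    rcases Finset.mem_union.mp he with h | h
    · exact G₁.ne e h
    · exact G₂.ne e h

/-- The subgraph of `G` induced by a vertex set `S`: vertex set `S` and all edges of `G`
with both endpoints in `S`. -/
noncomputable def induce (G : DirGraph V) (S : Finset V) : DirGraph V where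
  verts := S
  edges := G.edges.filter fun e => e.1 ∈ S ∧ e.2 ∈ S
  edge_fst := fun e he => ((Finset.mem_filter.mp he).2).1
  edge_snd := fun e he => ((Finset.mem_filter.mp he).2).2
  ne := fun e he => G.ne e (Finset.mem_filter.mp he).1

/-- Delete a vertex and all edges incident to it. -/
noncomputable def deleteVert [DecidableEq V] (G : DirGraph V) (v : V) : DirGraph V where
  verts := G.verts.erase v
  edges := G.edges.filter fun e => e.1 ≠ v ∧ e.2 ≠ v
  edge_fst := by
    intro e he
    rw [Finset.mem_filter] at he
    exact Finset.mem_erase.mpr ⟨he.2.1, G.edge_fst e he.1⟩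
  edge_snd := by
    intro e he
    rw [Finset.mem_filter] at he
    exact Finset.mem_erase.mpr ⟨he.2.2, G.edge_snd e he.1⟩
  ne := fun e he => G.ne e (Finset.mem_filter.mp he).1

/-- The reverse graph: same vertices, every edge reversed. -/
noncomputable def reverse [DecidableEq V] (G : DirGraph V) : DirGraph V where
  verts := G.verts
  edges := G.edges.image fun e => (e.2, e.1)
  edge_fst := by
    intro e he
    obtain ⟨a, ha, rfl⟩ := Finset.mem_image.mp he
    exact G.edge_snd a ha
  edge_snd := by
    intro e he
    obtain ⟨a, ha, rfl⟩ := Finset.mem_image.mp he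
    exact G.edge_fst a ha
  ne := by
    intro e he
    obtain ⟨a, ha, rfl⟩ := Finset.mem_image.mp he
    exact (G.ne a ha).symm

end DirGraph

/-!
Since `l' ≤ l`, the (k,l)-core satisfies the degree bounds of the (k,l')-core, so by maximality it
is a subgraph of it. Weak reachability in a subgraph implies weak reachability in the larger graph,
so a component of the smaller graph meeting a component of the larger one lies inside it.
-/

namespace DirGraph

variable {V : Type*} {G H : DirGraph V}

theorem IsKLCore.isSubgraph_of_le {k l k' l' : ℕ} {K K' : DirGraph V}
    (hK : G.IsKLCore k l K) (hK' : G.IsKLCore k' l' K') (hk : k' ≤ k) (hl : l' ≤ l) :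
    K.IsSubgraph K' :=
  hK'.2.2 K hK.1 fun v hv => ⟨hk.trans (hK.2.1 v hv).1, hl.trans (hK.2.1 v hv).2⟩

theorem Reach.symm {u v : V} (h : G.Reach u v) : G.Reach v u :=
  haveI : Std.Symm G.Adj := ⟨fun _ _ => Or.symm⟩
  Std.Symm.symm (r := Relation.ReflTransGen G.Adj) _ _ h

theorem IsSubgraph.reach (hHG : H.IsSubgraph G) {u v : V} (h : H.Reach u v) : G.Reach u v :=
  Relation.ReflTransGen.mono (fun _ _ => Or.imp (hHG.2 ·) (hHG.2 ·)) u v h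

theorem mem_component_verts {q v : V} :
    v ∈ (G.component q).verts ↔ v ∈ G.verts ∧ G.Reach q v :=
  Finset.mem_filter

theorem mem_component_edges {q : V} {e : V × V} :
    e ∈ (G.component q).edges ↔ e ∈ G.edges ∧ G.Reach q e.1 :=
  Finset.mem_filter

theorem IsSubgraph.component_isSubgraph_of_mem (hHG : H.IsSubgraph G) {q q' v : V}
    (hv : v ∈ (H.component q).verts) (hv' : v ∈ (G.component q').verts) :
    (H.component q).IsSubgraph (G.component q') := by
  rw [mem_component_verts] at hv hv'
  have hq'q : G.Reach q' q := hv'.2.trans (hHG.reach hv.2).symm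
  constructor
  · intro u hu
    rw [mem_component_verts] at hu ⊢
    exact ⟨hHG.1 hu.1, hq'q.trans (hHG.reach hu.2)⟩
  · intro e he
    rw [mem_component_edges] at he ⊢
    exact ⟨hHG.2 he.1, hq'q.trans (hHG.reach he.2)⟩

end DirGraph

open DirGraph in
/-- for `l' < l`, a weakly connected component `C` of the (k,l)-core and a
weakly connected component `C'` of the (k,l')-core are either vertex-disjoint or `C` is
a subgraph of `C'` (laminarity underlying the k-tree of the D-Forest index). -/
theorem klCore_components_laminar {V : Type*} [DecidableEq V] (G K K' C C' : DirGraph V)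
    (k l l' : ℕ) (hll : l' < l)
    (hK : G.IsKLCore k l K) (hK' : G.IsKLCore k l' K')
    (hC : K.IsComponent C) (hC' : K'.IsComponent C') :
    C.verts ∩ C'.verts = ∅ ∨ C.IsSubgraph C' := by
  have hKK' : K.IsSubgraph K' := hK.isSubgraph_of_le hK' le_rfl hll.le
  obtain ⟨q, -, rfl⟩ := hC
  obtain ⟨q', -, rfl⟩ := hC'
  rcases Finset.eq_empty_or_nonempty ((K.component q).verts ∩ (K'.component q').verts) with
    hdisj | ⟨v, hv⟩
  · exact Or.inl hdisj
  · rw [Finset.mem_inter] at hv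
    exact Or.inr (hKK'.component_isSubgraph_of_mem hv.1 hv.2)
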